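/- For all positive integers p, n, h, k, the number m_{n,h,k}^{(p)} of p-watermelons of length 2n with height < h and depth > -k equals the p×p determinant det_{0≤i,j<p}( Σ_{ℓ∈ℤ} [ C(2n, n+ℓ(h+k)+i−j) − C(2n, n+ℓ(h+k)+h−i−j) ] ), where C(a,b) denotes the binomial coefficient (taken to be 0 when b < 0 or b > a), and the sum over ℓ ∈ ℤ has only finitely many nonzero terms. -/

import Mathlib

open scoped BigOperators
open Filter

/-- Binomial coefficient with integer lower argument, `0` outside range. -/
def ichoose (a : ℕ) (b : ℤ) : ℕ := if 0 ≤ b then a.choose b.toNat else 0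

/-- A `p`-watermelon of length `2n` (no wall): the `i`-th branch starts at `(0,2i)`,
ends at `(2n,2i)`, takes steps `(1,1)` or `(1,-1)`, and no two branches share a point.
`y i t` is the ordinate of the `i`-th branch at abscissa `t`. -/
def IsMelon (p n : ℕ) (y : Fin p → Fin (2*n+1) → ℤ) : Prop :=
  (∀ i, y i 0 = 2 * (i : ℤ)) ∧
  (∀ i, y i (Fin.last (2*n)) = 2 * (i : ℤ)) ∧
  (∀ i (t : Fin (2*n)), y i t.succ - y i t.castSucc = 1 ∨ y i t.succ - y i t.castSucc = -1) ∧
  (∀ i j, i ≠ j → ∀ t, y i t ≠ y j t)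

/-- The height of a watermelon: the maximal ordinate reached (by its top-most branch). -/
noncomputable def melonHeight {p n : ℕ} (y : Fin p → Fin (2*n+1) → ℤ) : ℤ :=
  sSup {v | ∃ i t, y i t = v}

/-- The depth of a watermelon: the minimal ordinate reached (by its bottom-most branch). -/
noncomputable def melonDepth {p n : ℕ} (y : Fin p → Fin (2*n+1) → ℤ) : ℤ :=
  sInf {v | ∃ i t, y i t = v}

/-- The range of a watermelon: height minus depth. -/
noncomputable def melonRange {p n : ℕ} (y : Fin p → Fin (2*n+1) → ℤ) : ℤ :=
  melonHeight y - melonDepth y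

/-!
Shifted up by `k - 1`, a watermelon with height `< h` and depth `> -k` is a family of `p` walks of
length `2n` on the path graph with `h + k - 1` vertices, the `i`-th one from `2i + k - 1` back to
itself, which never meet. Since the starting points all have the same parity, walks that never
meet stay in order, so expanding `det (A ^ (2n)) (zᵢ, zⱼ)` (with `A` the adjacency matrix) one step
at a time leaves exactly the non-intersecting families: in every other term two walks meet and
the remaining determinant has two equal rows. The entries of `A ^ (2n)` are given by the
reflection principle for the two walls of the strip. When `2p > h + 1` there is no watermelon,
and the rows `h / 2` and `h - h / 2` of the matrix are opposite.
-/

open SimpleGraph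

lemma ichoose_succ (m : ℕ) (q : ℤ) :
    (ichoose (m + 1) q : ℤ) = ichoose m q + ichoose m (q - 1) := by
  unfold ichoose
  rcases lt_trichotomy q 0 with hq | rfl | hq
  · rw [if_neg (by omega), if_neg (by omega), if_neg (by omega)]; simp
  · simp
  · obtain ⟨r, rfl⟩ : ∃ r : ℕ, q = r + 1 := ⟨(q - 1).toNat, by omega⟩
    rw [if_pos (by omega), if_pos (by omega), if_pos (by omega),
      show ((r : ℤ) + 1).toNat = r + 1 by omega, show ((r : ℤ) + 1 - 1).toNat = r by omega,
      Nat.choose_succ_succ']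
    push_cast; ring

lemma ichoose_sub_eq (m : ℕ) (q : ℤ) : ichoose m (m - q) = ichoose m q := by
  unfold ichoose
  by_cases hq : 0 ≤ q ∧ q ≤ m
  · rw [if_pos (by omega), if_pos hq.1, show ((m : ℤ) - q).toNat = m - q.toNat by omega,
      Nat.choose_symm (by omega)]
  · rcases not_and_or.1 hq with hq | hq
    · rw [if_neg hq, if_pos (by omega), Nat.choose_eq_zero_of_lt (by omega)]
    · rw [if_neg (by omega), if_pos (by omega), Nat.choose_eq_zero_of_lt (by omega)]

lemma ichoose_zero (q : ℤ) : ichoose 0 q = if q = 0 then 1 else 0 := by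
  unfold ichoose
  split_ifs with h₁ h₂ h₂ <;> first | simp_all | rw [Nat.choose_eq_zero_of_lt (by omega)]

lemma ichoose_eq_zero_of_notMem_Icc {m : ℕ} {q : ℤ} (hq : q ∉ Set.Icc 0 (m : ℤ)) :
    ichoose m q = 0 := by
  rw [Set.mem_Icc] at hq
  unfold ichoose
  split_ifs with h
  · exact Nat.choose_eq_zero_of_lt (by omega)
  · rfl

lemma hasFiniteSupport_ichoose {P : ℤ} (hP : P ≠ 0) (m : ℕ) (q : ℤ) :
    Function.HasFiniteSupport fun ℓ : ℤ => (ichoose m (q + ℓ * P) : ℤ) := by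
  refine (Set.finite_Icc (-(|q| + m)) (|q| + m)).subset fun ℓ hℓ => ?_
  have hq : 0 ≤ q + ℓ * P ∧ q + ℓ * P ≤ m := by
    by_contra hq
    exact hℓ (by simp [ichoose_eq_zero_of_notMem_Icc hq])
  have hℓP : |ℓ| ≤ |ℓ * P| := by
    rw [abs_mul]
    exact le_mul_of_one_le_right (abs_nonneg ℓ) (Int.one_le_abs hP)
  rw [Set.mem_Icc, ← abs_le]
  cases abs_cases (ℓ * P) <;> cases abs_cases q <;> omega

noncomputable def periodicChoose (P : ℤ) (m : ℕ) (q : ℤ) : ℤ :=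
  ∑ᶠ ℓ : ℤ, (ichoose m (q + ℓ * P) : ℤ)

section periodicChoose

variable {P : ℤ} (m : ℕ)

lemma periodicChoose_succ (hP : P ≠ 0) (q : ℤ) :
    periodicChoose P (m + 1) q = periodicChoose P m q + periodicChoose P m (q - 1) := by
  rw [periodicChoose, periodicChoose, periodicChoose,
    ← finsum_add_distrib (hasFiniteSupport_ichoose hP m q) (hasFiniteSupport_ichoose hP m _)]
  refine finsum_congr fun ℓ => ?_
  rw [ichoose_succ, sub_add_eq_add_sub]

lemma periodicChoose_add_period (q : ℤ) :
    periodicChoose P m (q + P) = periodicChoose P m q := by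
  rw [periodicChoose, periodicChoose,
    ← finsum_comp_equiv (Equiv.addRight 1) (f := fun ℓ => (ichoose m (q + ℓ * P) : ℤ))]
  refine finsum_congr fun ℓ => ?_
  simp only [Equiv.coe_addRight]
  ring_nf

lemma periodicChoose_sub_eq (q : ℤ) : periodicChoose P m (m - q) = periodicChoose P m q := by
  rw [periodicChoose, periodicChoose,
    ← finsum_comp_equiv (Equiv.neg ℤ) (f := fun ℓ => (ichoose m (q + ℓ * P) : ℤ))]
  refine finsum_congr fun ℓ => ?_
  rw [← ichoose_sub_eq]
  simp only [Equiv.neg_apply]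
  ring_nf

lemma periodicChoose_zero (hP : P ≠ 0) (q : ℤ) :
    periodicChoose P 0 q = if P ∣ q then 1 else 0 := by
  simp only [periodicChoose, ichoose_zero]
  split_ifs with hq
  · obtain ⟨c, rfl⟩ := hq
    rw [finsum_eq_single _ (-c) fun ℓ hℓ => ?_]
    · rw [if_pos (by ring)]; rfl
    · rw [if_neg fun h => hℓ (mul_right_cancel₀ hP (by linarith))]
      rfl
  · refine finsum_eq_zero_of_forall_eq_zero fun ℓ => ?_
    rw [if_neg fun h => hq ⟨-ℓ, by linarith⟩]
    rfl

lemma finsum_ichoose_sub_ichoose (hP : P ≠ 0) (x y : ℤ) :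
    ∑ᶠ ℓ : ℤ, ((ichoose m (x + ℓ * P) : ℤ) - ichoose m (y + ℓ * P)) =
      periodicChoose P m x - periodicChoose P m y :=
  finsum_sub_distrib (hasFiniteSupport_ichoose hP m x) (hasFiniteSupport_ichoose hP m y)

end periodicChoose

namespace Matrix

lemma det_mul_eq_sum_prod_mul_det_submatrix {ι κ R : Type*} [Fintype ι] [DecidableEq ι]
    [Fintype κ] [CommRing R] (A : Matrix ι κ R) (B : Matrix κ ι R) :
    (A * B).det = ∑ w : ι → κ, (∏ i, A i (w i)) * (B.submatrix w id).det := by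
  have hrows : A * B = fun i => ∑ c, A i c • B c := by
    ext i j
    simp [mul_apply, Finset.sum_apply]
  change detRowAlternating.toMultilinearMap (A * B) = _
  rw [hrows, MultilinearMap.map_sum]
  refine Finset.sum_congr rfl fun w _ => ?_
  rw [MultilinearMap.map_smul_univ, smul_eq_mul]
  rfl

lemma det_eq_zero_of_row_add_row_eq_zero {ι R : Type*} [Fintype ι] [DecidableEq ι]
    [CommRing R] [NoZeroDivisors R] [CharZero R] (M : Matrix ι ι R) {i j : ι}
    (h : M i + M j = 0) : M.det = 0 := by
  rcases eq_or_ne i j with rfl | hij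
  · exact det_eq_zero_of_row_eq_zero i fun c => add_self_eq_zero.1 (congrFun h c)
  · rw [← det_updateRow_add_self M hij, h]
    exact det_eq_zero_of_row_eq_zero i fun c => by simp

end Matrix

instance (N : ℕ) : DecidableRel (pathGraph N).Adj :=
  fun _ _ => decidable_of_iff _ pathGraph_adj.symm

section pathGraph

variable {N : ℕ}

lemma sum_mul_adjMatrix_pathGraph {R : Type*} [NonAssocSemiring R] (f : Fin N → R) (b : Fin N) :
    ∑ c, f c * (pathGraph N).adjMatrix R c b =
      (if hb : b.val + 1 < N then f ⟨b.val + 1, hb⟩ else 0) +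
        (if hb : 0 < b.val then f ⟨b.val - 1, by omega⟩ else 0) := by
  have hsplit : ∀ c, f c * (pathGraph N).adjMatrix R c b =
      (if c.val = b.val + 1 then f c else 0) + (if c.val + 1 = b.val then f c else 0) := by
    intro c
    simp only [adjMatrix_apply, pathGraph_adj]
    split_ifs <;> first | omega | simp
  rw [Finset.sum_congr rfl fun c _ => hsplit c, Finset.sum_add_distrib]
  congr 1
  · split_ifs with hb
    · rw [Finset.sum_eq_single_of_mem _ (Finset.mem_univ ⟨b.val + 1, hb⟩)
        fun c _ hc => if_neg fun h => hc (Fin.ext h), if_pos rfl]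
    · exact Finset.sum_eq_zero fun c _ => if_neg (by omega)
  · split_ifs with hb
    · rw [Finset.sum_eq_single_of_mem _ (Finset.mem_univ ⟨b.val - 1, by omega⟩)
        fun c _ hc => if_neg fun h => hc (Fin.ext (by dsimp only; omega)),
        if_pos (by dsimp only; omega)]
    · exact Finset.sum_eq_zero fun c _ => if_neg (by omega)

/-- Reflection principle in the strip `[0, N)`: of the `C(m, u)` walks from `a` to `b`, with
`u = (m + b - a) / 2` up-steps, subtract the `C(m, u + a + 1)` reflected in `-1`; the reflections
in `-1` and in `N` generate the translations by `2 (N + 1)`, which makes everything periodic. -/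
lemma adjMatrix_pathGraph_pow_apply (m : ℕ) (a b : Fin N) (u : ℤ)
    (hu : 2 * u = m + b - a) :
    ((pathGraph N).adjMatrix ℤ ^ m) a b =
      periodicChoose (N + 1) m u - periodicChoose (N + 1) m (u + a + 1) := by
  have hP : (N : ℤ) + 1 ≠ 0 := by omega
  induction m generalizing b u with
  | zero =>
    have ha := a.isLt
    have hb := b.isLt
    push_cast at hu
    rw [pow_zero, Matrix.one_apply, periodicChoose_zero hP, periodicChoose_zero hP,
      if_neg (c := (N : ℤ) + 1 ∣ u + a + 1)
        fun h => by have := Int.eq_zero_of_abs_lt_dvd h (by rw [abs_lt]; omega); omega]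
    by_cases hab : a = b
    · rw [if_pos hab, if_pos ⟨0, by subst hab; omega⟩]; rfl
    · have hab' : (a : ℤ) ≠ b := fun h => hab (Fin.ext (by exact_mod_cast h))
      rw [if_neg hab,
        if_neg fun h => by have := Int.eq_zero_of_abs_lt_dvd h (by rw [abs_lt]; omega); omega]
      rfl
  | succ m ih =>
    rw [pow_succ, Matrix.mul_apply, sum_mul_adjMatrix_pathGraph, periodicChoose_succ _ hP,
      periodicChoose_succ _ hP]
    have hup : (if hb : b.val + 1 < N then ((pathGraph N).adjMatrix ℤ ^ m) a ⟨b.val + 1, hb⟩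
        else 0) = periodicChoose (N + 1) m u - periodicChoose (N + 1) m (u + a + 1) := by
      split_ifs with hb
      · exact ih _ _ (by push_cast at hu ⊢; omega)
      · -- at the top of the strip the two terms cancel by the reflection `u ↦ m - u`
        have hb' := b.isLt
        rw [show u + a + 1 = (m - u) + (N + 1) by push_cast at hu; omega,
          periodicChoose_add_period, periodicChoose_sub_eq, sub_self]
    have hdown : (if hb : 0 < b.val then
        ((pathGraph N).adjMatrix ℤ ^ m) a ⟨b.val - 1, by omega⟩ else 0) =
          periodicChoose (N + 1) m (u - 1) - periodicChoose (N + 1) m (u + a + 1 - 1) := by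
      split_ifs with hb
      · rw [ih _ (u - 1) (by push_cast at hu ⊢; omega)]
        ring_nf
      · rw [show u + a + 1 - 1 = m - (u - 1) by push_cast at hu; omega,
          periodicChoose_sub_eq, sub_self]
    rw [hup, hdown]
    ring

end pathGraph

namespace SimpleGraph

variable {V ι : Type*} (G : SimpleGraph V)

def IsNonIntersectingFamily (m : ℕ) (z e : ι → V) (f : ι → Fin (m + 1) → V) : Prop :=
  (∀ i, f i 0 = z i) ∧ (∀ i, f i (Fin.last m) = e i) ∧
    (∀ i (t : Fin m), G.Adj (f i t.castSucc) (f i t.succ)) ∧ ∀ t, Function.Injective (f · t)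

variable {G}

open Classical in
lemma card_isNonIntersectingFamily_zero {z : ι → V} (hz : Function.Injective z) (e : ι → V) :
    Nat.card {f // G.IsNonIntersectingFamily 0 z e f} = if z = e then 1 else 0 := by
  split_ifs with hze
  · subst hze
    refine Nat.card_eq_one_iff_unique.2 ⟨⟨fun f g => Subtype.ext ?_⟩,
      ⟨⟨fun i _ => z i, fun _ => rfl, fun _ => rfl, fun _ t => t.elim0, fun _ => hz⟩⟩⟩
    funext i t
    rw [Fin.fin_one_eq_zero t, f.2.1, g.2.1]
  · have : IsEmpty {f // G.IsNonIntersectingFamily 0 z e f} :=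
      ⟨fun f => hze (funext fun i => by rw [← f.2.1 i, ← f.2.2.1 i]; rfl)⟩
    exact Nat.card_of_isEmpty

def isNonIntersectingFamilySuccEquiv (m : ℕ) {z : ι → V} (hz : Function.Injective z)
    (e : ι → V) :
    {f // G.IsNonIntersectingFamily (m + 1) z e f} ≃
      Σ w : {w : ι → V // (∀ i, G.Adj (z i) (w i)) ∧ Function.Injective w},
        {f // G.IsNonIntersectingFamily m w e f} where
  toFun f := ⟨⟨fun i => f.1 i 1, fun i => by simpa [f.2.1 i] using f.2.2.2.1 i 0,
      f.2.2.2.2 1⟩,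
    ⟨fun i => Fin.tail (f.1 i), fun _ => rfl, f.2.2.1, fun i t => f.2.2.2.1 i t.succ,
      fun t => f.2.2.2.2 t.succ⟩⟩
  invFun g := ⟨fun i => Fin.cons (z i) (g.2.1 i), fun _ => rfl, g.2.2.2.1,
    fun i t => Fin.cases (by simpa [g.2.2.1] using g.1.2.1 i)
      (fun s => by simpa [← Fin.succ_castSucc] using g.2.2.2.2.1 i s) t,
    fun t => Fin.cases hz (fun s => by simpa using g.2.2.2.2.2 s) t⟩
  left_inv f := Subtype.ext (funext fun i => (congrArg (Fin.cons · _) (f.2.1 i)).symm.trans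
    (Fin.cons_self_tail (f.1 i)))
  right_inv g := Sigma.subtype_ext (Subtype.ext (funext fun i => g.2.2.1 i)) rfl

lemma card_isNonIntersectingFamily_succ [Fintype V] [DecidableEq V] [DecidableRel G.Adj]
    [Fintype ι] [DecidableEq ι] (m : ℕ) {z : ι → V} (hz : Function.Injective z) (e : ι → V) :
    Nat.card {f // G.IsNonIntersectingFamily (m + 1) z e f} =
      ∑ w : {w : ι → V // (∀ i, G.Adj (z i) (w i)) ∧ Function.Injective w},
        Nat.card {f // G.IsNonIntersectingFamily m w e f} := by
  rw [Nat.card_congr (isNonIntersectingFamilySuccEquiv m hz e), Nat.card_sigma]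

end SimpleGraph

section Lindstrom

variable {ι : Type*} {N : ℕ}

lemma mod_two_eq_of_forall_pathGraph_adj {z w : ι → Fin N}
    (hpar : ∀ i j, (z i : ℕ) % 2 = z j % 2) (hadj : ∀ i, (pathGraph N).Adj (z i) (w i))
    (i j : ι) : (w i : ℕ) % 2 = w j % 2 := by
  have := hpar i j
  have := pathGraph_adj.1 (hadj i)
  have := pathGraph_adj.1 (hadj j)
  omega

variable [LinearOrder ι]

lemma strictMono_of_forall_pathGraph_adj {z w : ι → Fin N} (hz : StrictMono z)
    (hpar : ∀ i j, (z i : ℕ) % 2 = z j % 2) (hadj : ∀ i, (pathGraph N).Adj (z i) (w i))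
    (hw : Function.Injective w) : StrictMono w := by
  intro a b hab
  have hzab : (z a : ℕ) < z b := hz hab
  have hne : (w a : ℕ) ≠ w b := fun h => hab.ne (hw (Fin.ext h))
  have := hpar a b
  have := pathGraph_adj.1 (hadj a)
  have := pathGraph_adj.1 (hadj b)
  rw [Fin.lt_def]
  omega

variable [Fintype ι]

open Classical in
lemma det_one_submatrix_of_strictMono {z e : ι → Fin N} (hz : StrictMono z)
    (he : StrictMono e) :
    ((1 : Matrix (Fin N) (Fin N) ℤ).submatrix z e).det = if z = e then 1 else 0 := by
  split_ifs with hze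
  · rw [hze, Matrix.submatrix_one _ he.injective, Matrix.det_one]
  · obtain ⟨i, hi⟩ : ∃ i, z i ∉ Set.range e := by
      by_contra! h
      refine hze ((hz.range_inj he).1
        (Set.eq_of_subset_of_ncard_le (Set.range_subset_iff.2 h) ?_))
      rw [Set.ncard_range_of_injective hz.injective, Set.ncard_range_of_injective he.injective]
    exact Matrix.det_eq_zero_of_row_eq_zero i fun j =>
      Matrix.one_apply_ne fun h => hi ⟨j, h.symm⟩

theorem det_adjMatrix_pathGraph_pow_submatrix_eq_card (m : ℕ) {z e : ι → Fin N}
    (hz : StrictMono z) (he : StrictMono e) (hpar : ∀ i j, (z i : ℕ) % 2 = z j % 2) :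
    (((pathGraph N).adjMatrix ℤ ^ m).submatrix z e).det =
      Nat.card {f // (pathGraph N).IsNonIntersectingFamily m z e f} := by
  classical
  induction m generalizing z with
  | zero =>
    rw [pow_zero, det_one_submatrix_of_strictMono hz he,
      card_isNonIntersectingFamily_zero hz.injective]
    split_ifs <;> rfl
  | succ m ih =>
    rw [pow_succ', Matrix.submatrix_mul _ _ _ id _ Function.bijective_id,
      Matrix.det_mul_eq_sum_prod_mul_det_submatrix,
      card_isNonIntersectingFamily_succ m hz.injective, Nat.cast_sum,
      ← Finset.sum_subtype _ (fun _ => Finset.mem_filter_univ _)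
        (fun w => (Nat.card {f // (pathGraph N).IsNonIntersectingFamily m w e f} : ℤ)),
      Finset.sum_filter]
    refine Finset.sum_congr rfl fun w _ => ?_
    simp only [Matrix.submatrix_submatrix, Function.id_comp, Function.comp_id,
      Matrix.submatrix_apply, id, adjMatrix_apply]
    split_ifs with hw
    · rw [Finset.prod_eq_one fun i _ => if_pos (hw.1 i), one_mul,
        ih (strictMono_of_forall_pathGraph_adj hz hpar hw.1 hw.2)
          (mod_two_eq_of_forall_pathGraph_adj hpar hw.1)]
    · rcases not_and_or.1 hw with hadj | hinj
      · obtain ⟨i, hi⟩ := not_forall.1 hadj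
        rw [Finset.prod_eq_zero (Finset.mem_univ i) (if_neg hi), zero_mul]
      · obtain ⟨a, b, hab, hne⟩ := Function.not_injective_iff.1 hinj
        rw [Matrix.det_zero_of_row_eq hne (funext fun j => by simp [hab]), mul_zero]

end Lindstrom

section Melon

variable {p n h s : ℕ}

lemma finite_melon_ordinates (y : Fin p → Fin (2 * n + 1) → ℤ) :
    {v | ∃ i t, y i t = v}.Finite :=
  (Set.finite_range fun q : Fin p × Fin (2 * n + 1) => y q.1 q.2).subset
    fun _ ⟨i, t, hv⟩ => ⟨(i, t), hv⟩

lemma melonHeight_lt_iff (hp : 0 < p) (y : Fin p → Fin (2 * n + 1) → ℤ) (c : ℤ) :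
    melonHeight y < c ↔ ∀ i t, y i t < c := by
  rw [melonHeight, ← Int.le_sub_one_iff,
    csSup_le_iff (finite_melon_ordinates y).bddAbove ⟨_, ⟨⟨0, hp⟩, 0, rfl⟩⟩]
  simp only [Set.mem_ofPred_eq, forall_exists_index, Int.le_sub_one_iff]
  exact ⟨fun H i t => H _ i t rfl, fun H _ i t hv => hv ▸ H i t⟩

lemma lt_melonDepth_iff (hp : 0 < p) (y : Fin p → Fin (2 * n + 1) → ℤ) (c : ℤ) :
    c < melonDepth y ↔ ∀ i t, c < y i t := by
  rw [melonDepth, ← Int.add_one_le_iff,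
    le_csInf_iff (finite_melon_ordinates y).bddBelow ⟨_, ⟨⟨0, hp⟩, 0, rfl⟩⟩]
  simp only [Set.mem_ofPred_eq, forall_exists_index, Int.add_one_le_iff]
  exact ⟨fun H i t => H _ i t rfl, fun H _ i t hv => hv ▸ H i t⟩

lemma le_melonHeight {y : Fin p → Fin (2 * n + 1) → ℤ} (hy : IsMelon p n y) (i : Fin p) :
    2 * (i : ℤ) ≤ melonHeight y :=
  le_csSup (finite_melon_ordinates y).bddAbove ⟨i, 0, hy.1 i⟩

def melonStart (hph : 2 * p ≤ h + 1) : Fin p → Fin (h + s) :=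
  fun i => ⟨2 * i + s, by have := i.isLt; omega⟩

lemma melonStart_strictMono (hph : 2 * p ≤ h + 1) : StrictMono (melonStart (s := s) hph) :=
  fun i j hij => by simp only [melonStart, Fin.mk_lt_mk]; have : (i : ℕ) < j := hij; omega

lemma isMelon_iff_isNonIntersectingFamily (hph : 2 * p ≤ h + 1)
    (f : Fin p → Fin (2 * n + 1) → Fin (h + s)) :
    IsMelon p n (fun i t => (f i t : ℤ) - s) ↔
      (pathGraph (h + s)).IsNonIntersectingFamily (2 * n) (melonStart hph) (melonStart hph)
        f := by
  simp only [IsMelon, IsNonIntersectingFamily, melonStart, Fin.ext_iff, pathGraph_adj,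
    Function.Injective]
  refine and_congr ?_ (and_congr ?_ (and_congr ?_ ?_))
  · exact forall_congr' fun i => by omega
  · exact forall_congr' fun i => by omega
  · exact forall_congr' fun i => forall_congr' fun t => by omega
  · refine ⟨fun H t a b hab => ?_, fun H a b hab t hf => hab (Fin.ext (H t (by omega)))⟩
    by_contra hne
    exact H a b (fun h => hne (congrArg Fin.val h)) t (by omega)

def boundedMelonEquiv (hp : 0 < p) :
    {y : Fin p → Fin (2 * n + 1) → ℤ //
        IsMelon p n y ∧ melonHeight y < (h : ℤ) ∧ -((s + 1 : ℕ) : ℤ) < melonDepth y} ≃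
      {f : Fin p → Fin (2 * n + 1) → Fin (h + s) //
        IsMelon p n (fun i t => (f i t : ℤ) - s)} where
  toFun y :=
    have hbound i t := And.intro ((melonHeight_lt_iff hp _ _).1 y.2.2.1 i t)
      ((lt_melonDepth_iff hp _ _).1 y.2.2.2 i t)
    ⟨fun i t => ⟨(y.1 i t + s).toNat, by have := hbound i t; omega⟩, by
      convert y.2.1 using 3 with i t
      have := hbound i t
      change ((y.1 i t + s).toNat : ℤ) - s = y.1 i t
      omega⟩
  invFun f := ⟨fun i t => (f.1 i t : ℤ) - s, f.2,
    (melonHeight_lt_iff hp _ _).2 fun i t => by have := (f.1 i t).isLt; omega,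
    (lt_melonDepth_iff hp _ _).2 fun i t => by omega⟩
  left_inv y := Subtype.ext (funext fun i => funext fun t => by
    have := (lt_melonDepth_iff hp _ _).1 y.2.2.2 i t
    change ((y.1 i t + s).toNat : ℤ) - s = y.1 i t
    omega)
  right_inv f := Subtype.ext (funext fun i => funext fun t => Fin.ext (by simp only; omega))

lemma adjMatrix_pathGraph_pow_melonStart (hph : 2 * p ≤ h + 1) (i j : Fin p) :
    ((pathGraph (h + s)).adjMatrix ℤ ^ (2 * n)) (melonStart hph i) (melonStart hph j) =
      ∑ᶠ ℓ : ℤ,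
        ((ichoose (2 * n)
            ((n : ℤ) + ℓ * ((h : ℤ) + ((s + 1 : ℕ) : ℤ)) + (i : ℤ) - (j : ℤ)) : ℤ)
          - (ichoose (2 * n)
            ((n : ℤ) + ℓ * ((h : ℤ) + ((s + 1 : ℕ) : ℤ)) + (h : ℤ) - (i : ℤ) - (j : ℤ)) : ℤ)) := by
  have hstart (i : Fin p) : ((melonStart (s := s) hph i : ℕ) : ℤ) = 2 * i + s := by
    simp [melonStart]
  rw [adjMatrix_pathGraph_pow_apply _ _ _ (n + j - i) (by rw [hstart, hstart]; push_cast; ring),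
    show ((h + s : ℕ) : ℤ) + 1 = h + ((s + 1 : ℕ) : ℤ) by push_cast; ring,
    (finsum_congr fun ℓ => by ring_nf).trans (finsum_ichoose_sub_ichoose
      (P := h + ((s + 1 : ℕ) : ℤ)) (2 * n) (by positivity) (n + i - j) (n + h - i - j))]
  congr 1
  · rw [← periodicChoose_sub_eq _ ((n : ℤ) + i - j)]
    congr 1
    push_cast; ring
  · rw [← periodicChoose_sub_eq _ ((n : ℤ) + h - i - j), hstart,
      ← periodicChoose_add_period _ (((2 * n : ℕ) : ℤ) - (n + h - i - j))]
    congr 1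
    push_cast; ring

end Melon

lemma finsum_ichoose_sub_ichoose_reflect (n h k : ℕ) {x y : ℤ} (hxy : x + y = h) (j : ℤ) :
    ∑ᶠ ℓ : ℤ, ((ichoose (2 * n) ((n : ℤ) + ℓ * ((h : ℤ) + (k : ℤ)) + y - j) : ℤ)
        - (ichoose (2 * n) ((n : ℤ) + ℓ * ((h : ℤ) + (k : ℤ)) + (h : ℤ) - y - j) : ℤ)) =
      -∑ᶠ ℓ : ℤ, ((ichoose (2 * n) ((n : ℤ) + ℓ * ((h : ℤ) + (k : ℤ)) + x - j) : ℤ)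
        - (ichoose (2 * n) ((n : ℤ) + ℓ * ((h : ℤ) + (k : ℤ)) + (h : ℤ) - x - j) : ℤ)) := by
  rw [← finsum_neg_distrib]
  refine finsum_congr fun ℓ => ?_
  obtain rfl : y = h - x := by omega
  ring_nf

theorem stmt0 (p n h k : ℕ) (hp : 0 < p) (hk : 0 < k) :
    (Nat.card {y : Fin p → Fin (2*n+1) → ℤ //
        IsMelon p n y ∧ melonHeight y < (h : ℤ) ∧ -(k : ℤ) < melonDepth y} : ℤ) =
      Matrix.det (Matrix.of fun i j : Fin p =>
        ∑ᶠ ℓ : ℤ,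
          ((ichoose (2*n) ((n : ℤ) + ℓ*((h : ℤ)+(k : ℤ)) + (i : ℤ) - (j : ℤ)) : ℤ)
            - (ichoose (2*n) ((n : ℤ) + ℓ*((h : ℤ)+(k : ℤ)) + (h : ℤ) - (i : ℤ) - (j : ℤ)) : ℤ))) := by
  by_cases hph : 2 * p ≤ h + 1
  · obtain ⟨s, rfl⟩ : ∃ s, k = s + 1 := ⟨k - 1, by omega⟩
    rw [Nat.card_congr ((boundedMelonEquiv hp).trans
        (Equiv.subtypeEquivRight (isMelon_iff_isNonIntersectingFamily hph))),
      ← det_adjMatrix_pathGraph_pow_submatrix_eq_card _ (melonStart_strictMono hph)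
        (melonStart_strictMono hph) fun i j => by simp [melonStart]]
    congr 1
    ext i j
    exact adjMatrix_pathGraph_pow_melonStart hph i j
  · have : IsEmpty {y : Fin p → Fin (2*n+1) → ℤ //
        IsMelon p n y ∧ melonHeight y < (h : ℤ) ∧ -(k : ℤ) < melonDepth y} :=
      ⟨fun y => by
        have : 2 * ((p - 1 : ℕ) : ℤ) ≤ melonHeight y.1 := le_melonHeight y.2.1 ⟨p - 1, by omega⟩
        have := y.2.2.1
        omega⟩
    rw [Nat.card_of_isEmpty, Nat.cast_zero, Matrix.det_eq_zero_of_row_add_row_eq_zero _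
      (i := ⟨h - h / 2, by omega⟩) (j := ⟨h / 2, by omega⟩)]
    ext j
    rw [Pi.add_apply, Matrix.of_apply, Matrix.of_apply,
      finsum_ichoose_sub_ichoose_reflect n h k (x := (h / 2 : ℕ)) (by dsimp only; omega),
      neg_add_cancel, Pi.zero_apply]
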